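/- arXiv:2307.14160 — 3 statements merged into one kernel-verified Lean document; each statement's English description precedes it below -/
import Mathlib

section
/- Let S be a real symmetric matrix indexed by ι = Fin q ⊕ Fin q, let λ₁ ≥ 0 and let λ₂ ≥ λ₂^sym. Then for every positive definite symmetric real matrix Θ indexed by ι, the J-symmetrized matrix Θ̄ := (Θ + JΘJ)/2 satisfies L(Θ̄) ≤ L(Θ); moreover Θ̄ is fully symmetric, i.e. JΘ̄J = Θ̄. (This is the inequality proved for Theorem 1: any sufficiently penalized pdglasso objective is not increased by full symmetrization.) -/
open Matrix Sum

/-- The swap permutation matrix `J = fromBlocks 0 I I 0` on `Fin q ⊕ Fin q`. -/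
noncomputable def Jswap (q : ℕ) : Matrix (Fin q ⊕ Fin q) (Fin q ⊕ Fin q) ℝ :=
  Matrix.fromBlocks 0 1 1 0

/-- Entrywise ℓ1 norm of a real matrix. -/
noncomputable def l1norm {m n : Type*} [Fintype m] [Fintype n] (A : Matrix m n ℝ) : ℝ :=
  ∑ i, ∑ j, |A i j|

/-- The pdglasso objective
`L(Θ) = -log det Θ + tr(SΘ) + λ₁‖Θ‖₁ + λ₂(‖Θ_LL - Θ_RR‖₁ + ‖Θ_LR - Θ_RL‖₁)`. -/
noncomputable def pdObjective {q : ℕ} (S : Matrix (Fin q ⊕ Fin q) (Fin q ⊕ Fin q) ℝ)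
    (l1 l2 : ℝ) (Θ : Matrix (Fin q ⊕ Fin q) (Fin q ⊕ Fin q) ℝ) : ℝ :=
  -Real.log Θ.det + (S * Θ).trace + l1 * l1norm Θ
    + l2 * (l1norm (Θ.toBlocks₁₁ - Θ.toBlocks₂₂) + l1norm (Θ.toBlocks₁₂ - Θ.toBlocks₂₁))

/-!
Conjugation by `J` swaps the diagonal blocks of `Θ` and its off-diagonal blocks, so it preserves
the determinant, positive semidefiniteness and the entrywise ℓ1 norm. Hence the midpoint `Θ̄`
of `Θ` and `JΘJ` has no fusion penalty, at most the ℓ1 norm of `Θ` (convexity), and at least the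
determinant of `Θ` (midpoint log-concavity of `det`: after congruence by `Θ^{-1/2}` this is
AM-GM on the eigenvalues). The linear term moves by
`½ tr(S(JΘJ - Θ)) = ½ tr((S_LL - S_RR)(Θ_RR - Θ_LL)) + ½ tr((S_RL - S_LR)(Θ_RL - Θ_LR))`,
which is at most `λ₂^sym` times the fusion penalty of `Θ` that `Θ̄` no longer pays.
-/

namespace Matrix

lemma trace_fromBlocks {m n R : Type*} [Fintype m] [Fintype n] [AddCommMonoid R]
    (A : Matrix m m R) (B : Matrix m n R) (C : Matrix n m R) (D : Matrix n n R) :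
    (fromBlocks A B C D).trace = A.trace + D.trace := by
  simp [trace, Fintype.sum_sum_type]

variable {n : Type*} [Fintype n] [DecidableEq n]

lemma IsHermitian.det_cfc {M : Matrix n n ℝ} (hM : M.IsHermitian) (f : ℝ → ℝ) :
    (cfc f M).det = ∏ i, f (hM.eigenvalues i) := by
  rw [hM.cfc_eq]
  simp [IsHermitian.cfc, -Unitary.conjStarAlgAut_apply]

lemma PosSemidef.one_le_det_half_smul_one_add {M : Matrix n n ℝ} (hM : M.PosSemidef)
    (hdet : M.det = 1) : 1 ≤ ((1 / 2 : ℝ) • (1 + M)).det := by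
  have hcfc : (1 / 2 : ℝ) • (1 + M) = cfc (fun x : ℝ => 1 / 2 * (1 + x)) M := by
    have hsa : IsSelfAdjoint M := hM.isHermitian
    rw [cfc_const_mul _ (fun x : ℝ => 1 + x) M, cfc_const_add _ (fun x : ℝ => x) M, cfc_id' ℝ M,
      map_one]
  have hμ := hM.eigenvalues_nonneg
  calc (1 : ℝ) = √M.det := by rw [hdet, Real.sqrt_one]
    _ = ∏ i, √(hM.1.eigenvalues i) := by
      rw [hM.1.det_eq_prod_eigenvalues, RCLike.ofReal_real_eq_id, Function.id_def,
        Real.sqrt_prod _ fun i _ => hμ i]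
    _ ≤ ∏ i, 1 / 2 * (1 + hM.1.eigenvalues i) := by
      refine Finset.prod_le_prod (fun i _ => Real.sqrt_nonneg _) fun i _ => ?_
      nlinarith [Real.sq_sqrt (hμ i), sq_nonneg (√(hM.1.eigenvalues i) - 1)]
    _ = ((1 / 2 : ℝ) • (1 + M)).det := by rw [hcfc, hM.1.det_cfc]

open scoped MatrixOrder in
lemma PosDef.det_le_det_midpoint {A B : Matrix n n ℝ} (hA : A.PosDef) (hB : B.PosSemidef)
    (h : A.det = B.det) : A.det ≤ ((1 / 2 : ℝ) • (A + B)).det := by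
  set C := CFC.sqrt A
  have hCC : C * C = A := CFC.sqrt_mul_sqrt_self A hA.posSemidef.nonneg
  have hdetC : C.det ^ 2 = A.det := by rw [sq, ← det_mul, hCC]
  have hCu : IsUnit C.det := by
    rw [isUnit_iff_ne_zero]
    rintro h0
    simpa [h0, ← hdetC] using hA.det_pos
  have hCinv : (C⁻¹)ᴴ = C⁻¹ := by
    rw [conjTranspose_nonsing_inv, (CFC.sqrt_nonneg A).posSemidef.isHermitian]
  set M := C⁻¹ * B * C⁻¹
  have hM : M.PosSemidef := by simpa only [hCinv] using hB.conjTranspose_mul_mul_same C⁻¹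
  have hdetM : M.det = 1 := by
    have : C.det ≠ 0 := hCu.ne_zero
    rw [det_mul, det_mul, det_nonsing_inv, Ring.inverse_eq_inv', ← h, ← hdetC]
    field_simp
  have hmid : (1 / 2 : ℝ) • (A + B) = C * ((1 / 2 : ℝ) • (1 + M)) * C := by
    rw [← hCC, Matrix.mul_smul, Matrix.smul_mul, Matrix.mul_add, Matrix.add_mul, Matrix.mul_one]
    simp only [M, ← Matrix.mul_assoc, mul_nonsing_inv _ hCu, Matrix.one_mul]
    rw [Matrix.mul_assoc, nonsing_inv_mul _ hCu, Matrix.mul_one]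
  calc A.det = A.det * 1 := (mul_one _).symm
    _ ≤ A.det * ((1 / 2 : ℝ) • (1 + M)).det :=
      mul_le_mul_of_nonneg_left (hM.one_le_det_half_smul_one_add hdetM) hA.det_pos.le
    _ = ((1 / 2 : ℝ) • (A + B)).det := by rw [hmid, det_mul, det_mul, ← hdetC]; ring

end Matrix

section L1Norm

variable {m n : Type*} [Fintype m] [Fintype n]

@[simp]
lemma l1norm_zero : l1norm (0 : Matrix m n ℝ) = 0 := by
  simp [l1norm]

lemma l1norm_add_le (A B : Matrix m n ℝ) : l1norm (A + B) ≤ l1norm A + l1norm B := by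
  simp only [l1norm, Matrix.add_apply, ← Finset.sum_add_distrib]
  gcongr
  exact abs_add_le _ _

lemma l1norm_smul (c : ℝ) (A : Matrix m n ℝ) : l1norm (c • A) = |c| * l1norm A := by
  simp [l1norm, abs_mul, Finset.mul_sum]

lemma l1norm_sub_comm (A B : Matrix m n ℝ) : l1norm (A - B) = l1norm (B - A) := by
  simp only [l1norm, Matrix.sub_apply, abs_sub_comm]

lemma l1norm_fromBlocks {m' n' : Type*} [Fintype m'] [Fintype n'] (A : Matrix m n ℝ)
    (B : Matrix m n' ℝ) (C : Matrix m' n ℝ) (D : Matrix m' n' ℝ) :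
    l1norm (fromBlocks A B C D) = l1norm A + l1norm B + l1norm C + l1norm D := by
  simp only [l1norm, Fintype.sum_sum_type, fromBlocks_apply₁₁, fromBlocks_apply₁₂,
    fromBlocks_apply₂₁, fromBlocks_apply₂₂, Finset.sum_add_distrib]
  ring

lemma trace_mul_le_mul_l1norm (X : Matrix m n ℝ) (Y : Matrix n m ℝ) {c : ℝ}
    (hX : ∀ i j, |X i j| ≤ c) : (X * Y).trace ≤ c * l1norm Y := by
  calc (X * Y).trace = ∑ i, ∑ j, X i j * Y j i := by simp [trace, mul_apply]
    _ ≤ ∑ i, ∑ j, c * |Y j i| := Finset.sum_le_sum fun i _ => Finset.sum_le_sum fun j _ =>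
      calc X i j * Y j i ≤ |X i j * Y j i| := le_abs_self _
        _ = |X i j| * |Y j i| := abs_mul _ _
        _ ≤ c * |Y j i| := by gcongr; exact hX i j
    _ = c * l1norm Y := by rw [l1norm, Finset.sum_comm, Finset.mul_sum]; simp [Finset.mul_sum]

end L1Norm

section Jswap

variable {q : ℕ}

lemma Jswap_mul_fromBlocks_mul_Jswap (A B C D : Matrix (Fin q) (Fin q) ℝ) :
    Jswap q * fromBlocks A B C D * Jswap q = fromBlocks D C B A := by
  simp [Jswap, fromBlocks_multiply]

lemma Jswap_mul_mul_Jswap (Θ : Matrix (Fin q ⊕ Fin q) (Fin q ⊕ Fin q) ℝ) :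
    Jswap q * Θ * Jswap q = fromBlocks Θ.toBlocks₂₂ Θ.toBlocks₂₁ Θ.toBlocks₁₂ Θ.toBlocks₁₁ := by
  rw [← Jswap_mul_fromBlocks_mul_Jswap, fromBlocks_toBlocks]

lemma Jswap_mul_Jswap : Jswap q * Jswap q = 1 := by
  simp [Jswap, fromBlocks_multiply, ← fromBlocks_one]

lemma conjTranspose_Jswap : (Jswap q)ᴴ = Jswap q := by
  simp [Jswap, fromBlocks_transpose]

variable (Θ : Matrix (Fin q ⊕ Fin q) (Fin q ⊕ Fin q) ℝ)

lemma det_Jswap_mul_mul_Jswap : (Jswap q * Θ * Jswap q).det = Θ.det := by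
  rw [det_mul, det_mul, mul_right_comm, ← det_mul, Jswap_mul_Jswap, det_one, one_mul]

lemma Matrix.PosSemidef.Jswap_mul_mul_Jswap {Θ : Matrix (Fin q ⊕ Fin q) (Fin q ⊕ Fin q) ℝ}
    (hΘ : Θ.PosSemidef) : (Jswap q * Θ * Jswap q).PosSemidef := by
  simpa only [conjTranspose_Jswap] using hΘ.conjTranspose_mul_mul_same (Jswap q)

lemma l1norm_Jswap_mul_mul_Jswap : l1norm (Jswap q * Θ * Jswap q) = l1norm Θ := by
  conv_rhs => rw [← fromBlocks_toBlocks Θ]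
  rw [Jswap_mul_mul_Jswap, l1norm_fromBlocks, l1norm_fromBlocks]
  ring

lemma Jswap_mul_symmetrize_mul_Jswap :
    Jswap q * ((1 / 2 : ℝ) • (Θ + Jswap q * Θ * Jswap q)) * Jswap q
      = (1 / 2 : ℝ) • (Θ + Jswap q * Θ * Jswap q) := by
  have hJJ : Jswap q * (Jswap q * Θ * Jswap q) * Jswap q = Θ := by
    simp only [← Matrix.mul_assoc, Jswap_mul_Jswap, Matrix.one_mul]
    rw [Matrix.mul_assoc, Jswap_mul_Jswap, Matrix.mul_one]
  rw [Matrix.mul_smul, Matrix.smul_mul, Matrix.mul_add, Matrix.add_mul, hJJ, add_comm]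

lemma toBlocks_sub_eq_zero_of_Jswap_mul_mul_Jswap {Θ : Matrix (Fin q ⊕ Fin q) (Fin q ⊕ Fin q) ℝ}
    (h : Jswap q * Θ * Jswap q = Θ) :
    Θ.toBlocks₁₁ - Θ.toBlocks₂₂ = 0 ∧ Θ.toBlocks₁₂ - Θ.toBlocks₂₁ = 0 := by
  conv at h => rhs; rw [← fromBlocks_toBlocks Θ]
  rw [Jswap_mul_mul_Jswap, fromBlocks_inj] at h
  exact ⟨sub_eq_zero.mpr h.1.symm, sub_eq_zero.mpr h.2.1.symm⟩

lemma l1norm_symmetrize_le : l1norm ((1 / 2 : ℝ) • (Θ + Jswap q * Θ * Jswap q)) ≤ l1norm Θ :=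
  calc l1norm ((1 / 2 : ℝ) • (Θ + Jswap q * Θ * Jswap q))
      = 1 / 2 * l1norm (Θ + Jswap q * Θ * Jswap q) := by rw [l1norm_smul]; norm_num
    _ ≤ 1 / 2 * (l1norm Θ + l1norm (Jswap q * Θ * Jswap q)) := by gcongr; exact l1norm_add_le _ _
    _ = l1norm Θ := by rw [l1norm_Jswap_mul_mul_Jswap]; ring

lemma trace_mul_Jswap_mul_mul_Jswap_sub (S : Matrix (Fin q ⊕ Fin q) (Fin q ⊕ Fin q) ℝ) :
    (S * (Jswap q * Θ * Jswap q - Θ)).trace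
      = ((S.toBlocks₁₁ - S.toBlocks₂₂) * (Θ.toBlocks₂₂ - Θ.toBlocks₁₁)).trace
        + ((S.toBlocks₂₁ - S.toBlocks₁₂) * (Θ.toBlocks₂₁ - Θ.toBlocks₁₂)).trace := by
  rw [Jswap_mul_mul_Jswap]
  conv_lhs => rw [← fromBlocks_toBlocks S, ← fromBlocks_toBlocks Θ]
  simp only [toBlocks_fromBlocks₁₁, toBlocks_fromBlocks₁₂, toBlocks_fromBlocks₂₁,
    toBlocks_fromBlocks₂₂, sub_eq_add_neg, fromBlocks_neg, fromBlocks_add, fromBlocks_multiply,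
    trace_fromBlocks, Matrix.mul_add, Matrix.add_mul, Matrix.mul_neg, Matrix.neg_mul, trace_add,
    trace_neg]
  ring

lemma trace_mul_symmetrize_le (S : Matrix (Fin q ⊕ Fin q) (Fin q ⊕ Fin q) ℝ) {l2 : ℝ}
    (hl2 : ∀ i j : Fin q,
      max (|S (inl i) (inl j) - S (inr i) (inr j)| / 2)
          (|S (inr i) (inl j) - S (inl i) (inr j)| / 2) ≤ l2) :
    (S * ((1 / 2 : ℝ) • (Θ + Jswap q * Θ * Jswap q))).trace
      ≤ (S * Θ).trace + l2 * (l1norm (Θ.toBlocks₁₁ - Θ.toBlocks₂₂)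
        + l1norm (Θ.toBlocks₁₂ - Θ.toBlocks₂₁)) := by
  have hdiag := trace_mul_le_mul_l1norm (S.toBlocks₁₁ - S.toBlocks₂₂)
    (Θ.toBlocks₂₂ - Θ.toBlocks₁₁) (c := 2 * l2) fun i j => by
      have := (max_le_iff.mp (hl2 i j)).1
      simp only [Matrix.sub_apply, toBlocks₁₁, toBlocks₂₂, of_apply]
      linarith
  have hoff := trace_mul_le_mul_l1norm (S.toBlocks₂₁ - S.toBlocks₁₂)
    (Θ.toBlocks₂₁ - Θ.toBlocks₁₂) (c := 2 * l2) fun i j => by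
      have := (max_le_iff.mp (hl2 i j)).2
      simp only [Matrix.sub_apply, toBlocks₁₂, toBlocks₂₁, of_apply]
      linarith
  have hsplit : (S * ((1 / 2 : ℝ) • (Θ + Jswap q * Θ * Jswap q))).trace
      = (S * Θ).trace + 1 / 2 * (S * (Jswap q * Θ * Jswap q - Θ)).trace := by
    rw [Matrix.mul_smul, trace_smul, Matrix.mul_add, Matrix.mul_sub, trace_add, trace_sub,
      smul_eq_mul]
    ring
  rw [hsplit, trace_mul_Jswap_mul_mul_Jswap_sub, l1norm_sub_comm Θ.toBlocks₁₁,
    l1norm_sub_comm Θ.toBlocks₁₂]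
  linarith

end Jswap

theorem pdglasso_symmetrization_decreases_objective_general (q : ℕ)
    (S : Matrix (Fin q ⊕ Fin q) (Fin q ⊕ Fin q) ℝ)
    (l1 l2 : ℝ) (hl1 : 0 ≤ l1)
    (hl2 : ∀ i j : Fin q,
      max (|S (inl i) (inl j) - S (inr i) (inr j)| / 2)
          (|S (inr i) (inl j) - S (inl i) (inr j)| / 2) ≤ l2)
    (Θ : Matrix (Fin q ⊕ Fin q) (Fin q ⊕ Fin q) ℝ) (hΘ : Θ.PosDef) :
    pdObjective S l1 l2 ((1 / 2 : ℝ) • (Θ + Jswap q * Θ * Jswap q))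
        ≤ pdObjective S l1 l2 Θ ∧
      Jswap q * ((1 / 2 : ℝ) • (Θ + Jswap q * Θ * Jswap q)) * Jswap q
        = (1 / 2 : ℝ) • (Θ + Jswap q * Θ * Jswap q) := by
  have hfix := Jswap_mul_symmetrize_mul_Jswap Θ
  refine ⟨?_, hfix⟩
  obtain ⟨hdiag, hoff⟩ := toBlocks_sub_eq_zero_of_Jswap_mul_mul_Jswap hfix
  have hdet := hΘ.det_le_det_midpoint hΘ.posSemidef.Jswap_mul_mul_Jswap
    (det_Jswap_mul_mul_Jswap Θ).symm
  have hlog := Real.log_le_log hΘ.det_pos hdet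
  have htrace := trace_mul_symmetrize_le Θ S hl2
  have hl1norm := mul_le_mul_of_nonneg_left (l1norm_symmetrize_le Θ) hl1
  simp only [pdObjective, hdiag, hoff, l1norm_zero]
  linarith

/-- if `λ₂ ≥ λ₂^sym` then for every positive definite symmetric `Θ` the
`J`-symmetrization `Θ̄ = (Θ + JΘJ)/2` satisfies `L(Θ̄) ≤ L(Θ)` and is fully symmetric. -/
theorem pdglasso_symmetrization_decreases_objective (q : ℕ) (hq : 0 < q)
    (S : Matrix (Fin q ⊕ Fin q) (Fin q ⊕ Fin q) ℝ) (hS : S.IsSymm)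
    (l1 l2 : ℝ) (hl1 : 0 ≤ l1)
    (hl2 : ∀ i j : Fin q,
      max (|S (inl i) (inl j) - S (inr i) (inr j)| / 2)
          (|S (inr i) (inl j) - S (inl i) (inr j)| / 2) ≤ l2)
    (Θ : Matrix (Fin q ⊕ Fin q) (Fin q ⊕ Fin q) ℝ) (hΘ : Θ.PosDef) (hΘs : Θ.IsSymm) :
    pdObjective S l1 l2 ((1 / 2 : ℝ) • (Θ + Jswap q * Θ * Jswap q))
        ≤ pdObjective S l1 l2 Θ ∧
      Jswap q * ((1 / 2 : ℝ) • (Θ + Jswap q * Θ * Jswap q)) * Jswap q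
        = (1 / 2 : ℝ) • (Θ + Jswap q * Θ * Jswap q) :=
  pdglasso_symmetrization_decreases_objective_general q S l1 l2 hl1 hl2 Θ hΘ
end

section
/- (Proposition 1, minimizer form.) Let S be a real symmetric matrix indexed by ι = Fin q ⊕ Fin q, let λ₂ ≥ 0 and suppose λ₁ ≥ |S i j| for all i, j ∈ ι with i ≠ j. If Θ̂ is a positive definite symmetric matrix that minimizes the pdglasso objective L over all positive definite symmetric matrices, then diag(Θ̂) is positive definite and is also a minimizer of L over all positive definite symmetric matrices; in particular the minimum of L is attained at a diagonal matrix. -/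
open Matrix Sum

/-!
Passing from `Θ̂` to its diagonal cannot increase any term of the objective. For `-log det` this
is Hadamard's inequality `det Θ ≤ ∏ Θᵢᵢ`, obtained by rescaling `Θ` to unit diagonal and applying
`log x ≤ x - 1` to its eigenvalues. In `tr(SΘ) + λ₁‖Θ‖₁` each off-diagonal entry contributes
`Sᵢⱼ Θⱼᵢ + λ₁|Θⱼᵢ| ≥ 0` because `|Sᵢⱼ| ≤ λ₁`, and the fused penalty only loses off-diagonal entries.
-/

namespace Matrix

variable {n : Type*} [Fintype n] [DecidableEq n]

theorem PosDef.log_det_le_trace_sub_card {A : Matrix n n ℝ} (hA : A.PosDef) :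
    Real.log A.det ≤ A.trace - Fintype.card n := by
  have hμ := hA.eigenvalues_pos
  rw [hA.isHermitian.det_eq_prod_eigenvalues, hA.isHermitian.trace_eq_sum_eigenvalues]
  simp only [RCLike.ofReal_real_eq_id, id]
  calc Real.log (∏ i, hA.isHermitian.eigenvalues i)
      = ∑ i, Real.log (hA.isHermitian.eigenvalues i) := Real.log_prod fun i _ => (hμ i).ne'
    _ ≤ ∑ i, (hA.isHermitian.eigenvalues i - 1) :=
      Finset.sum_le_sum fun i _ => Real.log_le_sub_one_of_pos (hμ i)
    _ = ∑ i, hA.isHermitian.eigenvalues i - Fintype.card n := by simp [Finset.sum_sub_distrib]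

theorem PosDef.det_le_one_of_diag_eq_one {A : Matrix n n ℝ} (hA : A.PosDef)
    (h1 : ∀ i, A i i = 1) : A.det ≤ 1 := by
  have htr : A.trace = Fintype.card n := by simp [trace, h1]
  have := hA.log_det_le_trace_sub_card
  rw [htr, sub_self] at this
  exact (Real.log_nonpos_iff hA.det_pos.le).1 this

theorem PosDef.det_le_prod_diag {A : Matrix n n ℝ} (hA : A.PosDef) : A.det ≤ ∏ i, A i i := by
  set e : n → ℝ := fun i => (√(A i i))⁻¹
  have he : ∀ i, e i * A i i * e i = 1 := fun i => by
    rw [mul_right_comm, ← mul_inv, Real.mul_self_sqrt hA.diag_pos.le,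
      inv_mul_cancel₀ hA.diag_pos.ne']
  have hB : (diagonal e * A * diagonal e).PosDef := by
    have he0 : IsUnit (diagonal e) := isUnit_diagonal.2 <| Pi.isUnit_iff.2 fun i =>
      (inv_pos.2 (Real.sqrt_pos.2 hA.diag_pos)).ne'.isUnit
    simpa using hA.mul_mul_conjTranspose_same (vecMul_injective_of_isUnit he0)
  have hdet := hB.det_le_one_of_diag_eq_one fun i => by
    simpa [mul_apply, diagonal_apply] using he i
  have hE : (∏ i, e i) * (∏ i, A i i) * (∏ i, e i) = 1 := by
    rw [← Finset.prod_mul_distrib, ← Finset.prod_mul_distrib]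
    exact Finset.prod_eq_one fun i _ => he i
  rw [det_mul, det_mul, det_diagonal] at hdet
  calc A.det = (∏ i, e i) * A.det * (∏ i, e i) * ∏ i, A i i := by
        linear_combination (-A.det) * hE
    _ ≤ 1 * ∏ i, A i i := by gcongr; exact Finset.prod_nonneg fun i _ => hA.diag_pos.le
    _ = ∏ i, A i i := one_mul _

end Matrix

lemma l1norm_nonneg {m n : Type*} [Fintype m] [Fintype n] (A : Matrix m n ℝ) : 0 ≤ l1norm A :=
  Finset.sum_nonneg fun _ _ => Finset.sum_nonneg fun _ _ => abs_nonneg _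

section L1Norm

variable {n : Type*} [Fintype n] [DecidableEq n]

lemma l1norm_diagonal_diag_le (A : Matrix n n ℝ) :
    l1norm (diagonal fun i => A i i) ≤ l1norm A := by
  refine Finset.sum_le_sum fun i _ => Finset.sum_le_sum fun j _ => ?_
  rcases eq_or_ne i j with rfl | hij
  · simp
  · simp [diagonal_apply_ne _ hij]

lemma trace_mul_add_mul_l1norm_diagonal_diag_le {S : Matrix n n ℝ} {l1 : ℝ}
    (hl1 : ∀ i j, i ≠ j → |S i j| ≤ l1) (A : Matrix n n ℝ) :
    (S * diagonal fun i => A i i).trace + l1 * l1norm (diagonal fun i => A i i) ≤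
      (S * A).trace + l1 * l1norm A := by
  have expand : ∀ M : Matrix n n ℝ,
      (S * M).trace + l1 * l1norm M = ∑ i, ∑ j, (S i j * M j i + l1 * |M j i|) := by
    intro M
    rw [l1norm, Finset.sum_comm]
    simp only [trace, diag, mul_apply, Finset.mul_sum, ← Finset.sum_add_distrib]
  rw [expand, expand]
  refine Finset.sum_le_sum fun i _ => Finset.sum_le_sum fun j _ => ?_
  rcases eq_or_ne i j with rfl | hij
  · simp
  · have h := neg_abs_le (S i j * A j i)
    rw [abs_mul] at h
    simp only [diagonal_apply_ne _ hij.symm, mul_zero, abs_zero, add_zero]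
    nlinarith [hl1 i j hij, abs_nonneg (A j i)]

lemma l1norm_toBlocks₁₁_sub_toBlocks₂₂_diagonal_diag_le {m : Type*} [Fintype m] [DecidableEq m]
    (A : Matrix (m ⊕ m) (m ⊕ m) ℝ) :
    l1norm ((diagonal fun i => A i i).toBlocks₁₁ - (diagonal fun i => A i i).toBlocks₂₂) ≤
      l1norm (A.toBlocks₁₁ - A.toBlocks₂₂) := by
  rw [toBlocks₁₁_diagonal, toBlocks₂₂_diagonal, diagonal_sub]
  exact l1norm_diagonal_diag_le (A.toBlocks₁₁ - A.toBlocks₂₂)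

lemma l1norm_toBlocks₁₂_sub_toBlocks₂₁_diagonal_diag_le {m : Type*} [Fintype m] [DecidableEq m]
    (A : Matrix (m ⊕ m) (m ⊕ m) ℝ) :
    l1norm ((diagonal fun i => A i i).toBlocks₁₂ - (diagonal fun i => A i i).toBlocks₂₁) ≤
      l1norm (A.toBlocks₁₂ - A.toBlocks₂₁) := by
  rw [toBlocks₁₂_diagonal, toBlocks₂₁_diagonal, sub_zero]
  simpa [l1norm] using l1norm_nonneg _

end L1Norm

theorem pdObjective_diagonal_diag_le {q : ℕ} {S : Matrix (Fin q ⊕ Fin q) (Fin q ⊕ Fin q) ℝ}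
    {l1 l2 : ℝ} (hl2 : 0 ≤ l2) (hl1 : ∀ i j, i ≠ j → |S i j| ≤ l1)
    {Θ : Matrix (Fin q ⊕ Fin q) (Fin q ⊕ Fin q) ℝ} (hΘ : Θ.PosDef) :
    pdObjective S l1 l2 (diagonal fun i => Θ i i) ≤ pdObjective S l1 l2 Θ := by
  have hlog : Real.log Θ.det ≤ Real.log (diagonal fun i => Θ i i).det :=
    Real.log_le_log hΘ.det_pos (by simpa using hΘ.det_le_prod_diag)
  have hfused := mul_le_mul_of_nonneg_left
    (add_le_add (l1norm_toBlocks₁₁_sub_toBlocks₂₂_diagonal_diag_le Θ)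
      (l1norm_toBlocks₁₂_sub_toBlocks₂₁_diagonal_diag_le Θ)) hl2
  have := trace_mul_add_mul_l1norm_diagonal_diag_le hl1 Θ
  unfold pdObjective
  linarith

theorem pdglasso_diagonal_minimizer_general (q : ℕ)
    (S : Matrix (Fin q ⊕ Fin q) (Fin q ⊕ Fin q) ℝ)
    (l1 l2 : ℝ) (hl2 : 0 ≤ l2)
    (hl1 : ∀ i j : Fin q ⊕ Fin q, i ≠ j → |S i j| ≤ l1)
    (Θhat : Matrix (Fin q ⊕ Fin q) (Fin q ⊕ Fin q) ℝ) (hΘ : Θhat.PosDef)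
    (hmin : ∀ Θ : Matrix (Fin q ⊕ Fin q) (Fin q ⊕ Fin q) ℝ, Θ.PosDef → Θ.IsSymm →
      pdObjective S l1 l2 Θhat ≤ pdObjective S l1 l2 Θ) :
    (Matrix.diagonal fun i => Θhat i i).PosDef ∧
      ∀ Θ : Matrix (Fin q ⊕ Fin q) (Fin q ⊕ Fin q) ℝ, Θ.PosDef → Θ.IsSymm →
        pdObjective S l1 l2 (Matrix.diagonal fun i => Θhat i i) ≤ pdObjective S l1 l2 Θ :=
  ⟨PosDef.diagonal fun _ => hΘ.diag_pos, fun Θ hΘpd hΘsymm =>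
    (pdObjective_diagonal_diag_le hl2 hl1 hΘ).trans (hmin Θ hΘpd hΘsymm)⟩

/-- Proposition 1, minimizer form: if `λ₁ ≥ |s_ij|` for all `i ≠ j` and `Θ̂`
minimizes the pdglasso objective over positive definite symmetric matrices, then
`diag(Θ̂)` is positive definite and also a minimizer. -/
theorem pdglasso_diagonal_minimizer (q : ℕ) (hq : 0 < q)
    (S : Matrix (Fin q ⊕ Fin q) (Fin q ⊕ Fin q) ℝ) (hS : S.IsSymm)
    (l1 l2 : ℝ) (hl2 : 0 ≤ l2)
    (hl1 : ∀ i j : Fin q ⊕ Fin q, i ≠ j → |S i j| ≤ l1)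
    (Θhat : Matrix (Fin q ⊕ Fin q) (Fin q ⊕ Fin q) ℝ) (hΘ : Θhat.PosDef) (hΘs : Θhat.IsSymm)
    (hmin : ∀ Θ : Matrix (Fin q ⊕ Fin q) (Fin q ⊕ Fin q) ℝ, Θ.PosDef → Θ.IsSymm →
      pdObjective S l1 l2 Θhat ≤ pdObjective S l1 l2 Θ) :
    (Matrix.diagonal fun i => Θhat i i).PosDef ∧
      ∀ Θ : Matrix (Fin q ⊕ Fin q) (Fin q ⊕ Fin q) ℝ, Θ.PosDef → Θ.IsSymm →
        pdObjective S l1 l2 (Matrix.diagonal fun i => Θhat i i) ≤ pdObjective S l1 l2 Θ :=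
  pdglasso_diagonal_minimizer_general q S l1 l2 hl2 hl1 Θhat hΘ hmin
end

section
/- Let S and Θ be real symmetric matrices indexed by a finite type ι, and suppose λ₁ ≥ |S i j| for all i, j ∈ ι with i ≠ j. Then trace(S·diag(Θ)) − trace(S·Θ) + λ₁·(‖diag(Θ)‖₁ − ‖Θ‖₁) ≤ 0, where diag(Θ) is the diagonal matrix with the same diagonal as Θ and ‖A‖₁ = Σ_{i,j} |A i j|. (Key step in the proof of Proposition 1.) -/
open Matrix Sum

/-! Write `Θ = D + E` with `D` its diagonal part. Then `tr(S D) − tr(S Θ) = −tr(S E)` and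
`‖Θ‖₁ = ‖D‖₁ + ‖E‖₁`; since `E` has zero diagonal, only off-diagonal entries of `S` enter
`tr(S E)`, so `|tr(S E)| ≤ λ₁ ‖E‖₁`. -/

theorem abs_trace_mul_le_of_diag_eq_zero {ι : Type*} [Fintype ι] (A B : Matrix ι ι ℝ) (c : ℝ)
    (hA : ∀ i j, i ≠ j → |A i j| ≤ c) (hB : ∀ i, B i i = 0) :
    |(A * B).trace| ≤ c * l1norm B := by
  have hterm : ∀ i j, |A i j * B j i| ≤ c * |B j i| := by
    intro i j
    rcases eq_or_ne i j with rfl | hij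
    · simp [hB]
    · rw [abs_mul]
      exact mul_le_mul_of_nonneg_right (hA i j hij) (abs_nonneg _)
  calc |(A * B).trace| = |∑ i, ∑ j, A i j * B j i| := by simp only [trace, diag, mul_apply]
    _ ≤ ∑ i, ∑ j, |A i j * B j i| :=
      (Finset.abs_sum_le_sum_abs _ _).trans (Finset.sum_le_sum fun _ _ ↦ Finset.abs_sum_le_sum_abs _ _)
    _ ≤ ∑ i, ∑ j, c * |B j i| := Finset.sum_le_sum fun i _ ↦ Finset.sum_le_sum fun j _ ↦ hterm i j
    _ = c * l1norm B := by simp only [l1norm, Finset.mul_sum]; exact Finset.sum_comm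

theorem l1norm_eq_l1norm_diagonal_add_l1norm_sub {ι : Type*} [Fintype ι] [DecidableEq ι]
    (Θ : Matrix ι ι ℝ) :
    l1norm Θ = l1norm (diagonal fun i => Θ i i) + l1norm (Θ - diagonal fun i => Θ i i) := by
  simp only [l1norm, ← Finset.sum_add_distrib]
  refine Finset.sum_congr rfl fun i _ ↦ Finset.sum_congr rfl fun j _ ↦ ?_
  rcases eq_or_ne i j with rfl | hij
  · simp
  · simp [hij]

theorem trace_l1_diagonal_step_general {ι : Type*} [Fintype ι] [DecidableEq ι]
    (S Θ : Matrix ι ι ℝ)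
    (l1 : ℝ) (hl1 : ∀ i j : ι, i ≠ j → |S i j| ≤ l1) :
    (S * Matrix.diagonal fun i => Θ i i).trace - (S * Θ).trace
      + l1 * (l1norm (Matrix.diagonal fun i => Θ i i) - l1norm Θ) ≤ 0 := by
  set D := Matrix.diagonal fun i => Θ i i
  have htrace : (S * D).trace - (S * Θ).trace = -(S * (Θ - D)).trace := by
    rw [Matrix.mul_sub, trace_sub]; ring
  have hbound := abs_trace_mul_le_of_diag_eq_zero S (Θ - D) l1 hl1 (by simp [D])
  rw [htrace, l1norm_eq_l1norm_diagonal_add_l1norm_sub Θ]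
  linarith [neg_abs_le (S * (Θ - D)).trace]

/-- key step in the proof of Proposition 1, over a general finite index
type: `tr(S diag(Θ)) − tr(S Θ) + λ₁ (‖diag(Θ)‖₁ − ‖Θ‖₁) ≤ 0` when `λ₁ ≥ |s_ij|` for all
`i ≠ j`. -/
theorem trace_l1_diagonal_step {ι : Type*} [Fintype ι] [DecidableEq ι]
    (S Θ : Matrix ι ι ℝ) (hS : S.IsSymm) (hΘ : Θ.IsSymm)
    (l1 : ℝ) (hl1 : ∀ i j : ι, i ≠ j → |S i j| ≤ l1) :
    (S * Matrix.diagonal fun i => Θ i i).trace - (S * Θ).trace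
      + l1 * (l1norm (Matrix.diagonal fun i => Θ i i) - l1norm Θ) ≤ 0 :=
  trace_l1_diagonal_step_general S Θ l1 hl1
end
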